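/- Let T > 0, α, β ≥ 0, and let E : [0,T] × ℝ^d → ℝ^d satisfy Hypothesis (E). Then for every initial point (X0, V0) ∈ ℝ^d × ℝ^d there exists a unique C¹ solution (X, V) : [0,T] → ℝ^d × ℝ^d of the characteristic system X' = V, V' = E(t, X) + (α − β|V|²)V with X(0) = X0, V(0) = V0; moreover there is a constant C > 0, depending only on T, α, β and the growth constant C_E of E, such that |(X(t), V(t))| ≤ (1 + |(X0, V0)|) e^{C t} for all t ∈ [0,T]. -/

import Mathlib

open MeasureTheory Set Metric Filter Topology

noncomputable section

/-- `ℝ^d` with the Euclidean norm. -/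
abbrev Rd (d : ℕ) := EuclideanSpace ℝ (Fin d)

/-- Phase space `ℝ^d × ℝ^d`. -/
abbrev Phase (d : ℕ) := Rd d × Rd d

/-- Hypothesis (E): `E` is continuous on `[0,T] × ℝ^d`, grows at most linearly
with constant `C_E`, and is locally Lipschitz in `x` uniformly in `t`. -/
structure HypE (d : ℕ) (T C_E : ℝ) (E : ℝ → Rd d → Rd d) : Prop where
  cont : ContinuousOn (fun p : ℝ × Rd d => E p.1 p.2) (Icc 0 T ×ˢ univ)
  growth : ∀ t ∈ Icc (0:ℝ) T, ∀ x : Rd d, ‖E t x‖ ≤ C_E * (1 + ‖x‖)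
  locLip : ∀ K : Set (Rd d), IsCompact K → ∃ L > 0, ∀ t ∈ Icc (0:ℝ) T,
    ∀ x ∈ K, ∀ y ∈ K, ‖E t x - E t y‖ ≤ L * ‖x - y‖

/-- Right-hand side of the characteristic system `X' = V`,
`V' = E(t,X) + (α - β|V|²)V`. -/
def Psi {d : ℕ} (α β : ℝ) (E : ℝ → Rd d → Rd d) (t : ℝ) (P : Phase d) : Phase d :=
  (P.2, E t P.1 + (α - β * ‖P.2‖ ^ 2) • P.2)

set_option linter.unusedSectionVars false

section ProjB

variable {F : Type*} [NormedAddCommGroup F] [NormedSpace ℝ F]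

/-- Radial projection onto the closed ball of radius `R`. -/
def projB (R : ℝ) (x : F) : F := (R / max R ‖x‖) • x

lemma projB_factor_nonneg {R : ℝ} (hR : 0 < R) (x : F) : 0 ≤ R / max R ‖x‖ :=
  div_nonneg hR.le (le_trans hR.le (le_max_left _ _))

lemma projB_factor_le_one {R : ℝ} (hR : 0 < R) (x : F) : R / max R ‖x‖ ≤ 1 :=
  div_le_one_of_le₀ (le_max_left _ _) (le_trans hR.le (le_max_left _ _))

lemma norm_projB_le_norm {R : ℝ} (hR : 0 < R) (x : F) : ‖projB R x‖ ≤ ‖x‖ := by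
  rw [projB, norm_smul, Real.norm_eq_abs, abs_of_nonneg (projB_factor_nonneg hR x)]
  calc (R / max R ‖x‖) * ‖x‖ ≤ 1 * ‖x‖ :=
        mul_le_mul_of_nonneg_right (projB_factor_le_one hR x) (norm_nonneg _)
    _ = ‖x‖ := one_mul _

lemma norm_projB_le {R : ℝ} (hR : 0 < R) (x : F) : ‖projB R x‖ ≤ R := by
  rw [projB, norm_smul, Real.norm_eq_abs, abs_of_nonneg (projB_factor_nonneg hR x)]
  have hm : 0 < max R ‖x‖ := lt_of_lt_of_le hR (le_max_left _ _)
  rw [div_mul_eq_mul_div, div_le_iff₀ hm]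
  exact mul_le_mul_of_nonneg_left (le_max_right _ _) hR.le

lemma projB_eq_self {R : ℝ} (hR : 0 < R) {x : F} (hx : ‖x‖ ≤ R) : projB R x = x := by
  rw [projB, max_eq_left hx, div_self hR.ne', one_smul]

lemma norm_projB_sub_le {R : ℝ} (hR : 0 < R) (x y : F) :
    ‖projB R x - projB R y‖ ≤ 2 * ‖x - y‖ := by
  set s := max R ‖x‖ with hs
  set t := max R ‖y‖ with ht
  have hs0 : 0 < s := lt_of_lt_of_le hR (le_max_left _ _)
  have ht0 : 0 < t := lt_of_lt_of_le hR (le_max_left _ _)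
  have key : projB R x - projB R y = (R / s) • (x - y) + ((R / s) - (R / t)) • y := by
    rw [projB, projB, smul_sub, sub_smul]; abel
  have hst : |t - s| ≤ ‖x - y‖ := by
    have := abs_max_sub_max_le_abs ‖y‖ ‖x‖ R
    rw [max_comm ‖y‖ R, max_comm ‖x‖ R, ← hs, ← ht] at this
    refine this.trans ?_
    exact (abs_norm_sub_norm_le y x).trans (by rw [norm_sub_rev])
  calc ‖projB R x - projB R y‖ ≤ ‖(R / s) • (x - y)‖ + ‖((R / s) - (R / t)) • y‖ := by
        rw [key]; exact norm_add_le _ _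
    _ ≤ ‖x - y‖ + |R / s - R / t| * ‖y‖ := by
        rw [norm_smul, Real.norm_eq_abs, abs_of_nonneg (projB_factor_nonneg hR x),
          norm_smul, Real.norm_eq_abs]
        gcongr
        calc (R / s) * ‖x - y‖ ≤ 1 * ‖x - y‖ :=
              mul_le_mul_of_nonneg_right (projB_factor_le_one hR x) (norm_nonneg _)
          _ = ‖x - y‖ := one_mul _
    _ ≤ ‖x - y‖ + |R / s - R / t| * t :=
        add_le_add le_rfl (mul_le_mul_of_nonneg_left (le_max_right _ _) (abs_nonneg _))
    _ ≤ 2 * ‖x - y‖ := by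
        have e : (R / s - R / t) * t = (R / s) * (t - s) := by
          field_simp
        have h1 : |R / s - R / t| * t = (R / s) * |t - s| := by
          have h2 : |R / s - R / t| * |t| = |(R / s - R / t) * t| := (abs_mul _ _).symm
          rw [abs_of_pos ht0] at h2
          rw [h2, e, abs_mul, abs_of_nonneg (projB_factor_nonneg hR x)]
        rw [h1]
        have : (R / s) * |t - s| ≤ 1 * ‖x - y‖ :=
          mul_le_mul (projB_factor_le_one hR x) hst (abs_nonneg _) zero_le_one
        linarith
  
end ProjB

lemma hasDerivWithinAt_fst' {F G : Type*} [NormedAddCommGroup F] [NormedSpace ℝ F]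
    [NormedAddCommGroup G] [NormedSpace ℝ G]
    {P : ℝ → F × G} {D : F × G} {s : Set ℝ} {t : ℝ} (h : HasDerivWithinAt P D s t) :
    HasDerivWithinAt (fun u => (P u).1) D.1 s t := by
  have := h.hasFDerivWithinAt.fst
  simpa [HasDerivWithinAt] using this.hasDerivWithinAt

lemma hasDerivWithinAt_snd' {F G : Type*} [NormedAddCommGroup F] [NormedSpace ℝ F]
    [NormedAddCommGroup G] [NormedSpace ℝ G]
    {P : ℝ → F × G} {D : F × G} {s : Set ℝ} {t : ℝ} (h : HasDerivWithinAt P D s t) :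
    HasDerivWithinAt (fun u => (P u).2) D.2 s t := by
  have := h.hasFDerivWithinAt.snd
  simpa [HasDerivWithinAt] using this.hasDerivWithinAt

/-- Grönwall-type a priori bound for the characteristic system. -/
lemma gronwall_aux {d : ℕ} {T C_E α : ℝ} (hT : 0 < T) (hα : 0 ≤ α) (hCE : 0 ≤ C_E)
    (P F : ℝ → Phase d)
    (hP : ∀ t ∈ Icc (0:ℝ) T, HasDerivWithinAt P (F t) (Icc 0 T) t)
    (h1 : ∀ t ∈ Icc (0:ℝ) T,
      (inner ℝ ((P t).1) ((F t).1) : ℝ) ≤ ‖(P t).1‖ * ‖(P t).2‖)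
    (h2 : ∀ t ∈ Icc (0:ℝ) T, (inner ℝ ((P t).2) ((F t).2) : ℝ) ≤
      C_E * (1 + ‖(P t).1‖) * ‖(P t).2‖ + α * ‖(P t).2‖ ^ 2) :
    ∀ t ∈ Icc (0:ℝ) T, ‖P t‖ ≤ (1 + ‖P 0‖) * Real.exp ((1 + 2 * C_E + α) * t) := by
  set K : ℝ := 2 * (1 + 2 * C_E + α) with hK
  have hK0 : 0 < K := by positivity
  set a : ℝ → ℝ := fun t => 1 + ‖(P t).1‖ ^ 2 with ha
  set b : ℝ → ℝ := fun t => 1 + ‖(P t).2‖ ^ 2 with hb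
  set M : ℝ → ℝ := fun t => max (a t) (b t) with hM
  -- derivatives of a and b
  have hda : ∀ t ∈ Icc (0:ℝ) T,
      HasDerivWithinAt a (2 * (inner ℝ ((P t).1) ((F t).1) : ℝ)) (Icc 0 T) t := by
    intro t ht
    have hX := hasDerivWithinAt_fst' (hP t ht)
    have h' := (HasDerivWithinAt.inner ℝ hX hX).const_add 1
    have e1 : (inner ℝ ((P t).1) ((F t).1) : ℝ) + (inner ℝ ((F t).1) ((P t).1) : ℝ)
        = 2 * (inner ℝ ((P t).1) ((F t).1) : ℝ) := by
      rw [real_inner_comm ((F t).1)]; ring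
    rw [e1] at h'
    have e2 : a = fun u => 1 + (inner ℝ ((P u).1) ((P u).1) : ℝ) := by
      funext u; rw [ha, real_inner_self_eq_norm_sq]
    rw [e2]; exact h'
  have hdb : ∀ t ∈ Icc (0:ℝ) T,
      HasDerivWithinAt b (2 * (inner ℝ ((P t).2) ((F t).2) : ℝ)) (Icc 0 T) t := by
    intro t ht
    have hX := hasDerivWithinAt_snd' (hP t ht)
    have h' := (HasDerivWithinAt.inner ℝ hX hX).const_add 1
    have e1 : (inner ℝ ((P t).2) ((F t).2) : ℝ) + (inner ℝ ((F t).2) ((P t).2) : ℝ)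
        = 2 * (inner ℝ ((P t).2) ((F t).2) : ℝ) := by
      rw [real_inner_comm ((F t).2)]; ring
    rw [e1] at h'
    have e2 : b = fun u => 1 + (inner ℝ ((P u).2) ((P u).2) : ℝ) := by
      funext u; rw [hb, real_inner_self_eq_norm_sq]
    rw [e2]; exact h'
  -- bounds on the derivatives
  have hM1 : ∀ t, 1 ≤ M t := fun t =>
    le_trans (by simp only [ha, le_add_iff_nonneg_right]; exact sq_nonneg _) (le_max_left _ _)
  have hMa : ∀ t, ‖(P t).1‖ ^ 2 ≤ M t - 1 := by
    intro t
    have h' : a t ≤ M t := le_max_left _ _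
    simp only [ha] at h'; linarith
  have hMb : ∀ t, ‖(P t).2‖ ^ 2 ≤ M t - 1 := by
    intro t
    have h' : b t ≤ M t := le_max_right _ _
    simp only [hb] at h'; linarith
  have hbd_a : ∀ t ∈ Icc (0:ℝ) T, 2 * (inner ℝ ((P t).1) ((F t).1) : ℝ) ≤ K * M t := by
    intro t ht
    have h := h1 t ht
    nlinarith [sq_nonneg (‖(P t).1‖ - ‖(P t).2‖), hM1 t, hMa t, hMb t,
      mul_nonneg hCE (hM1 t |>.trans' zero_le_one), mul_nonneg hα ((hM1 t).trans' zero_le_one)]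
  have hbd_b : ∀ t ∈ Icc (0:ℝ) T, 2 * (inner ℝ ((P t).2) ((F t).2) : ℝ) ≤ K * M t := by
    intro t ht
    have h := h2 t ht
    have hXn : (0:ℝ) ≤ ‖(P t).1‖ := norm_nonneg _
    have hVn : (0:ℝ) ≤ ‖(P t).2‖ := norm_nonneg _
    have hq1 : C_E * (2 * (1 + ‖(P t).1‖) * ‖(P t).2‖) ≤ C_E * (3 * M t) := by
      apply mul_le_mul_of_nonneg_left _ hCE
      nlinarith [sq_nonneg (1 + ‖(P t).1‖ - ‖(P t).2‖), hMa t, hMb t, hM1 t]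
    have hq2 : α * (2 * ‖(P t).2‖ ^ 2) ≤ α * (2 * M t) := by
      apply mul_le_mul_of_nonneg_left _ hα
      nlinarith [hMb t]
    nlinarith [hM1 t]
  -- continuity
  have hPc : ContinuousOn P (Icc 0 T) := fun t ht => (hP t ht).continuousWithinAt
  have hac : ContinuousOn a (Icc 0 T) := by
    apply ContinuousOn.add continuousOn_const
    exact ((continuous_fst.comp_continuousOn hPc).norm).pow 2
  have hbc : ContinuousOn b (Icc 0 T) := by
    apply ContinuousOn.add continuousOn_const
    exact ((continuous_snd.comp_continuousOn hPc).norm).pow 2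
  have hMc : ContinuousOn M (Icc 0 T) := fun x hx => (hac x hx).max (hbc x hx)
  -- Grönwall for M
  have key : ∀ t ∈ Icc (0:ℝ) T, M t ≤ M 0 * Real.exp (K * t) := by
    have hgr := le_gronwallBound_of_liminf_deriv_right_le (f := M) (f' := fun t => K * M t)
      (δ := M 0) (K := K) (ε := 0) (a := 0) (b := T) hMc ?_ le_rfl ?_
    · intro t ht
      have h := hgr t ht
      rwa [gronwallBound_ε0, sub_zero] at h
    · -- liminf condition
      intro t ht r hr
      have htT : t < T := ht.2
      have ht' : t ∈ Icc (0:ℝ) T := ⟨ht.1, htT.le⟩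
      have mka : Tendsto (slope a t) (𝓝[>] t)
          (𝓝 (2 * (inner ℝ ((P t).1) ((F t).1) : ℝ))) := by
        have h := (hda t ht').mono (Ioc_subset_Icc_self.trans (Icc_subset_Icc ht.1 le_rfl))
        rw [hasDerivWithinAt_iff_tendsto_slope] at h
        rwa [show Ioc t T \ {t} = Ioc t T by simp, nhdsWithin_Ioc_eq_nhdsGT htT] at h
      have mkb : Tendsto (slope b t) (𝓝[>] t)
          (𝓝 (2 * (inner ℝ ((P t).2) ((F t).2) : ℝ))) := by
        have h := (hdb t ht').mono (Ioc_subset_Icc_self.trans (Icc_subset_Icc ht.1 le_rfl))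
        rw [hasDerivWithinAt_iff_tendsto_slope] at h
        rwa [show Ioc t T \ {t} = Ioc t T by simp, nhdsWithin_Ioc_eq_nhdsGT htT] at h
      have ea : ∀ᶠ z in (𝓝[>] t), slope a t z < r :=
        mka.eventually_lt_const (lt_of_le_of_lt (hbd_a t ht') hr)
      have eb : ∀ᶠ z in (𝓝[>] t), slope b t z < r :=
        mkb.eventually_lt_const (lt_of_le_of_lt (hbd_b t ht') hr)
      have emem : ∀ᶠ z in (𝓝[>] t), z ∈ Ioi t := self_mem_nhdsWithin
      refine ((ea.and (eb.and emem)).mono ?_).frequently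
      rintro z ⟨hza, hzb, hzt⟩
      have hzt' : (0:ℝ) < z - t := sub_pos.2 hzt
      have hMz : M z - M t ≤ max (a z - a t) (b z - b t) := max_sub_max_le_max _ _ _ _
      have hle : (z - t)⁻¹ * (M z - M t)
          ≤ max ((z - t)⁻¹ * (a z - a t)) ((z - t)⁻¹ * (b z - b t)) := by
        rw [← mul_max_of_nonneg _ _ (inv_nonneg.2 hzt'.le)]
        exact mul_le_mul_of_nonneg_left hMz (inv_nonneg.2 hzt'.le)
      refine lt_of_le_of_lt hle (max_lt ?_ ?_)
      · simpa [slope_def_field, div_eq_inv_mul] using hza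
      · simpa [slope_def_field, div_eq_inv_mul] using hzb
    · intro t _
      simp
  -- conclude
  intro t ht
  have hKey := key t ht
  have hexp : Real.exp (K * t) = Real.exp ((1 + 2 * C_E + α) * t) ^ 2 := by
    rw [sq, ← Real.exp_add, hK]; ring_nf
  have hM0 : M 0 ≤ (1 + ‖P 0‖) ^ 2 := by
    have hx := norm_fst_le (P 0)
    have hv := norm_snd_le (P 0)
    have h0 := norm_nonneg (P 0)
    apply max_le
    · simp only [ha]; nlinarith [pow_le_pow_left₀ (norm_nonneg (P 0).1) hx 2]
    · simp only [hb]; nlinarith [pow_le_pow_left₀ (norm_nonneg (P 0).2) hv 2]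
  have hMt : M t ≤ ((1 + ‖P 0‖) * Real.exp ((1 + 2 * C_E + α) * t)) ^ 2 := by
    calc M t ≤ M 0 * Real.exp (K * t) := hKey
      _ ≤ (1 + ‖P 0‖) ^ 2 * Real.exp (K * t) :=
          mul_le_mul_of_nonneg_right hM0 (Real.exp_pos _).le
      _ = ((1 + ‖P 0‖) * Real.exp ((1 + 2 * C_E + α) * t)) ^ 2 := by rw [mul_pow, hexp]
  have hRnn : (0:ℝ) ≤ (1 + ‖P 0‖) * Real.exp ((1 + 2 * C_E + α) * t) := by positivity
  rw [Prod.norm_def]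
  apply max_le
  · have h' := (hMa t).trans (by linarith : M t - 1 ≤ ((1 + ‖P 0‖) * Real.exp ((1 + 2 * C_E + α) * t)) ^ 2)
    nlinarith [norm_nonneg (P t).1]
  · have h' := (hMb t).trans (by linarith : M t - 1 ≤ ((1 + ‖P 0‖) * Real.exp ((1 + 2 * C_E + α) * t)) ^ 2)
    nlinarith [norm_nonneg (P t).2]

/-- Lipschitz bound for the cubic friction term on a ball. -/
lemma cubic_lip {d : ℕ} {α β R : ℝ} (hα : 0 ≤ α) (hβ : 0 ≤ β) {x y : Rd d}
    (hx : ‖x‖ ≤ R) (hy : ‖y‖ ≤ R) :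
    ‖(α - β * ‖x‖ ^ 2) • x - (α - β * ‖y‖ ^ 2) • y‖ ≤ (α + 3 * β * R ^ 2) * ‖x - y‖ := by
  have hR : 0 ≤ R := le_trans (norm_nonneg x) hx
  have key : (α - β * ‖x‖ ^ 2) • x - (α - β * ‖y‖ ^ 2) • y
      = α • (x - y) - β • ((‖x‖ ^ 2) • (x - y) + (‖x‖ ^ 2 - ‖y‖ ^ 2) • y) := by
    module
  have habs : |‖x‖ ^ 2 - ‖y‖ ^ 2| ≤ (R + R) * ‖x - y‖ := by
    have h1 : |‖x‖ - ‖y‖| ≤ ‖x - y‖ := abs_norm_sub_norm_le x y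
    have e : ‖x‖ ^ 2 - ‖y‖ ^ 2 = (‖x‖ + ‖y‖) * (‖x‖ - ‖y‖) := by ring
    rw [e, abs_mul, abs_of_nonneg (by positivity : (0:ℝ) ≤ ‖x‖ + ‖y‖)]
    exact mul_le_mul (add_le_add hx hy) h1 (abs_nonneg _) (by positivity)
  have hx2 : ‖x‖ ^ 2 ≤ R ^ 2 := by nlinarith [norm_nonneg x]
  calc ‖(α - β * ‖x‖ ^ 2) • x - (α - β * ‖y‖ ^ 2) • y‖
      = ‖α • (x - y) - β • ((‖x‖ ^ 2) • (x - y) + (‖x‖ ^ 2 - ‖y‖ ^ 2) • y)‖ := by rw [key]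
    _ ≤ ‖α • (x - y)‖ + ‖β • ((‖x‖ ^ 2) • (x - y) + (‖x‖ ^ 2 - ‖y‖ ^ 2) • y)‖ :=
        norm_sub_le _ _
    _ ≤ α * ‖x - y‖ + β * (‖x‖ ^ 2 * ‖x - y‖ + |‖x‖ ^ 2 - ‖y‖ ^ 2| * ‖y‖) := by
        rw [norm_smul, norm_smul, Real.norm_eq_abs, Real.norm_eq_abs,
          abs_of_nonneg hα, abs_of_nonneg hβ]
        refine add_le_add le_rfl (mul_le_mul_of_nonneg_left ?_ hβ)
        calc ‖(‖x‖ ^ 2) • (x - y) + (‖x‖ ^ 2 - ‖y‖ ^ 2) • y‖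
            ≤ ‖(‖x‖ ^ 2) • (x - y)‖ + ‖(‖x‖ ^ 2 - ‖y‖ ^ 2) • y‖ := norm_add_le _ _
          _ ≤ ‖x‖ ^ 2 * ‖x - y‖ + |‖x‖ ^ 2 - ‖y‖ ^ 2| * ‖y‖ := by
              rw [norm_smul, norm_smul, Real.norm_eq_abs, Real.norm_eq_abs,
                abs_of_nonneg (sq_nonneg ‖x‖)]
    _ ≤ (α + 3 * β * R ^ 2) * ‖x - y‖ := by
        have h3 : |‖x‖ ^ 2 - ‖y‖ ^ 2| * ‖y‖ ≤ ((R + R) * ‖x - y‖) * R :=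
          mul_le_mul habs hy (norm_nonneg _) (by positivity)
        have h4 : ‖x‖ ^ 2 * ‖x - y‖ ≤ R ^ 2 * ‖x - y‖ :=
          mul_le_mul_of_nonneg_right hx2 (norm_nonneg _)
        nlinarith [norm_nonneg (x - y), mul_nonneg hβ (norm_nonneg (x - y))]

set_option maxHeartbeats 1000000 in
/-- Flow map, Lemma 3.2: existence, uniqueness and growth bound for the
characteristics.  The constant `C` depends only on `T`, `α`, `β` and the growth
constant `C_E` of the field. -/
theorem exists_unique_characteristics
    (d : ℕ) (T α β C_E : ℝ) (hT : 0 < T) (hα : 0 ≤ α) (hβ : 0 ≤ β) (hCE : 0 < C_E) :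
    ∃ C > 0, ∀ E : ℝ → Rd d → Rd d, HypE d T C_E E →
      ∀ X0 V0 : Rd d, ∃ P : ℝ → Phase d,
        ContDiffOn ℝ 1 P (Icc 0 T) ∧
        P 0 = (X0, V0) ∧
        (∀ t ∈ Icc (0:ℝ) T, HasDerivWithinAt P (Psi α β E t (P t)) (Icc 0 T) t) ∧
        (∀ t ∈ Icc (0:ℝ) T, ‖P t‖ ≤ (1 + ‖(X0, V0)‖) * Real.exp (C * t)) ∧
        (∀ Q : ℝ → Phase d, ContDiffOn ℝ 1 Q (Icc 0 T) → Q 0 = (X0, V0) →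
          (∀ t ∈ Icc (0:ℝ) T, HasDerivWithinAt Q (Psi α β E t (Q t)) (Icc 0 T) t) →
          ∀ t ∈ Icc (0:ℝ) T, Q t = P t) := by
  refine ⟨1 + 2 * C_E + α, by nlinarith, ?_⟩
  intro E hE X0 V0
  have hc0 : (0:ℝ) < 1 + 2 * C_E + α := by nlinarith
  set R0 : ℝ := (1 + ‖((X0, V0) : Phase d)‖) * Real.exp ((1 + 2 * C_E + α) * T) with hR0def
  have hR0 : 0 < R0 := by rw [hR0def]; positivity
  clear_value R0
  -- clamped time
  set τ : ℝ → ℝ := fun t => min (max t 0) T with hτ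
  have hτmem : ∀ t, τ t ∈ Icc (0:ℝ) T := fun t =>
    ⟨le_min (le_max_right _ _) hT.le, min_le_right _ _⟩
  have hτeq : ∀ t ∈ Icc (0:ℝ) T, τ t = t := by
    intro t ht
    simp only [hτ]
    rw [max_eq_left ht.1, min_eq_left ht.2]
  clear_value τ
  -- truncated field
  set v : ℝ → Phase d → Phase d := fun t P => Psi α β E (τ t) (projB R0 P) with hvdef
  clear_value v
  obtain ⟨L, hL0, hLip⟩ := hE.locLip (closedBall (0 : Rd d) R0) (isCompact_closedBall _ _)
  set Lv : ℝ := 2 * (1 + L + α + 3 * β * R0 ^ 2) with hLvdef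
  clear_value Lv
  have hLv0 : 0 ≤ Lv := by rw [hLvdef]; nlinarith [sq_nonneg R0, mul_nonneg hβ (sq_nonneg R0)]
  have hmem1 : ∀ W : Phase d, (projB R0 W).1 ∈ closedBall (0 : Rd d) R0 := by
    intro W
    rw [mem_closedBall_zero_iff]
    exact le_trans (norm_fst_le _) (norm_projB_le hR0 _)
  have hn1 : ∀ W : Phase d, ‖(projB R0 W).1‖ ≤ R0 :=
    fun W => le_trans (norm_fst_le _) (norm_projB_le hR0 _)
  have hn2 : ∀ W : Phase d, ‖(projB R0 W).2‖ ≤ R0 :=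
    fun W => le_trans (norm_snd_le _) (norm_projB_le hR0 _)
  -- global Lipschitz bound for the truncated field
  have hvLip : ∀ (t : ℝ) (P Q : Phase d), ‖v t P - v t Q‖ ≤ Lv * ‖P - Q‖ := by
    intro t P Q
    have e : v t P - v t Q =
        ((projB R0 P).2 - (projB R0 Q).2,
         (E (τ t) (projB R0 P).1 - E (τ t) (projB R0 Q).1) +
         ((α - β * ‖(projB R0 P).2‖ ^ 2) • (projB R0 P).2
           - (α - β * ‖(projB R0 Q).2‖ ^ 2) • (projB R0 Q).2)) := by
      simp only [hvdef, Psi, Prod.mk_sub_mk]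
      congr 1
      abel
    have hEd : ‖E (τ t) (projB R0 P).1 - E (τ t) (projB R0 Q).1‖
        ≤ L * ‖(projB R0 P).1 - (projB R0 Q).1‖ :=
      hLip (τ t) (hτmem t) _ (hmem1 P) _ (hmem1 Q)
    have hcub := cubic_lip (d := d) hα hβ (hn2 P) (hn2 Q)
    have hsub1 : ‖(projB R0 P).1 - (projB R0 Q).1‖ ≤ ‖projB R0 P - projB R0 Q‖ := by
      have h := norm_fst_le (projB R0 P - projB R0 Q)
      simpa using h
    have hsub2 : ‖(projB R0 P).2 - (projB R0 Q).2‖ ≤ ‖projB R0 P - projB R0 Q‖ := by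
      have h := norm_snd_le (projB R0 P - projB R0 Q)
      simpa using h
    have hproj : ‖projB R0 P - projB R0 Q‖ ≤ 2 * ‖P - Q‖ := norm_projB_sub_le hR0 _ _
    have hA0 : (0:ℝ) ≤ α + 3 * β * R0 ^ 2 := by nlinarith [mul_nonneg hβ (sq_nonneg R0)]
    rw [e, Prod.norm_def]
    apply max_le
    · calc ‖(projB R0 P).2 - (projB R0 Q).2‖ ≤ ‖projB R0 P - projB R0 Q‖ := hsub2
        _ ≤ 2 * ‖P - Q‖ := hproj
        _ ≤ Lv * ‖P - Q‖ := by
            refine mul_le_mul_of_nonneg_right ?_ (norm_nonneg _)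
            rw [hLvdef]
            nlinarith [mul_nonneg hβ (sq_nonneg R0)]
    · calc ‖(E (τ t) (projB R0 P).1 - E (τ t) (projB R0 Q).1) +
            ((α - β * ‖(projB R0 P).2‖ ^ 2) • (projB R0 P).2
              - (α - β * ‖(projB R0 Q).2‖ ^ 2) • (projB R0 Q).2)‖
          ≤ ‖E (τ t) (projB R0 P).1 - E (τ t) (projB R0 Q).1‖ +
            ‖(α - β * ‖(projB R0 P).2‖ ^ 2) • (projB R0 P).2
              - (α - β * ‖(projB R0 Q).2‖ ^ 2) • (projB R0 Q).2‖ := norm_add_le _ _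
        _ ≤ L * ‖(projB R0 P).1 - (projB R0 Q).1‖
            + (α + 3 * β * R0 ^ 2) * ‖(projB R0 P).2 - (projB R0 Q).2‖ := add_le_add hEd hcub
        _ ≤ L * ‖projB R0 P - projB R0 Q‖ + (α + 3 * β * R0 ^ 2) * ‖projB R0 P - projB R0 Q‖ :=
            add_le_add (mul_le_mul_of_nonneg_left hsub1 hL0.le)
              (mul_le_mul_of_nonneg_left hsub2 hA0)
        _ = (L + (α + 3 * β * R0 ^ 2)) * ‖projB R0 P - projB R0 Q‖ := by ring
        _ ≤ (L + (α + 3 * β * R0 ^ 2)) * (2 * ‖P - Q‖) :=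
            mul_le_mul_of_nonneg_left hproj (by nlinarith [mul_nonneg hβ (sq_nonneg R0)])
        _ = (2 * (L + (α + 3 * β * R0 ^ 2))) * ‖P - Q‖ := by ring
        _ ≤ Lv * ‖P - Q‖ :=
            mul_le_mul_of_nonneg_right (by rw [hLvdef]; linarith) (norm_nonneg _)
  -- uniform bound
  set Cb : ℝ := max R0 (C_E * (1 + R0) + (α + β * R0 ^ 2) * R0) with hCbdef
  have hCb0 : 0 < Cb := lt_of_lt_of_le hR0 (le_max_left _ _)
  clear_value Cb
  have hvBound : ∀ (t : ℝ) (P : Phase d), ‖v t P‖ ≤ Cb := by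
    intro t P
    have e : v t P = ((projB R0 P).2,
        E (τ t) (projB R0 P).1 + (α - β * ‖(projB R0 P).2‖ ^ 2) • (projB R0 P).2) := by
      rw [hvdef]; simp only [Psi]
    rw [e, Prod.norm_def, hCbdef]
    apply max_le
    · exact le_trans (hn2 P) (le_max_left _ _)
    · refine le_trans ?_ (le_max_right _ _)
      have hg := hE.growth (τ t) (hτmem t) (projB R0 P).1
      have habs : |α - β * ‖(projB R0 P).2‖ ^ 2| ≤ α + β * R0 ^ 2 := by
        have h2 : ‖(projB R0 P).2‖ ^ 2 ≤ R0 ^ 2 := by nlinarith [norm_nonneg (projB R0 P).2, hn2 P]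
        rw [abs_le]
        constructor <;>
          nlinarith [mul_nonneg hβ (sq_nonneg ‖(projB R0 P).2‖), mul_le_mul_of_nonneg_left h2 hβ]
      calc ‖E (τ t) (projB R0 P).1 + (α - β * ‖(projB R0 P).2‖ ^ 2) • (projB R0 P).2‖
          ≤ ‖E (τ t) (projB R0 P).1‖ + ‖(α - β * ‖(projB R0 P).2‖ ^ 2) • (projB R0 P).2‖ :=
            norm_add_le _ _
        _ ≤ C_E * (1 + R0) + (α + β * R0 ^ 2) * R0 := by
            refine add_le_add (hg.trans ?_) ?_
            · exact mul_le_mul_of_nonneg_left (by linarith [hn1 P]) hCE.le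
            · rw [norm_smul, Real.norm_eq_abs]
              exact mul_le_mul habs (hn2 P) (norm_nonneg _)
                (by nlinarith [mul_nonneg hβ (sq_nonneg R0)])
  -- Picard–Lindelöf
  have hvLipW : ∀ t : ℝ, LipschitzWith Lv.toNNReal (v t) := by
    intro t
    apply LipschitzWith.of_dist_le_mul
    intro P Q
    rw [dist_eq_norm, dist_eq_norm, Real.coe_toNNReal _ hLv0]
    exact hvLip t P Q
  have hPL : IsPicardLindelof v (tmin := 0) (tmax := T) ⟨0, ⟨le_rfl, hT.le⟩⟩ ((X0, V0) : Phase d)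
      (Cb * T).toNNReal 0 Cb.toNNReal Lv.toNNReal := by
    refine ⟨?_, ?_, ?_, ?_⟩
    · intro t _
      exact (hvLipW t).lipschitzOnWith
    · intro x _
      have hEc : ContinuousOn (fun t => E t (projB R0 x).1) (Icc 0 T) := by
        apply hE.cont.comp (Continuous.continuousOn (continuous_id.prodMk continuous_const))
        intro t ht
        exact ⟨ht, mem_univ _⟩
      have hc : ContinuousOn (fun t => Psi α β E t (projB R0 x)) (Icc 0 T) := by
        apply ContinuousOn.prodMk continuousOn_const
        exact hEc.add continuousOn_const
      apply hc.congr
      intro t ht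
      simp only [hvdef]
      rw [hτeq t ht]
    · intro t _ x _
      rw [Real.coe_toNNReal _ hCb0.le]
      exact hvBound t x
    · simp only [NNReal.coe_zero, sub_zero, Real.coe_toNNReal _ hCb0.le,
        Real.coe_toNNReal _ (mul_nonneg hCb0.le hT.le)]
      rw [max_eq_left hT.le]
  obtain ⟨f, hf0, hfd⟩ := hPL.exists_eq_forall_mem_Icc_hasDerivWithinAt₀
  replace hf0 : f 0 = ((X0, V0) : Phase d) := hf0
  -- Grönwall bound for solutions of the truncated system
  have hgrw : ∀ g : ℝ → Phase d,
      (∀ t ∈ Icc (0:ℝ) T, HasDerivWithinAt g (v t (g t)) (Icc 0 T) t) →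
      ∀ t ∈ Icc (0:ℝ) T, ‖g t‖ ≤ (1 + ‖g 0‖) * Real.exp ((1 + 2 * C_E + α) * t) := by
    intro g hg
    apply gronwall_aux hT hα hCE.le g (fun t => v t (g t)) hg
    · intro t ht
      have e1 : (v t (g t)).1 = (R0 / max R0 ‖g t‖) • (g t).2 := by
        rw [hvdef]; simp only [Psi, projB, Prod.smul_snd]
      rw [e1, real_inner_smul_right]
      have hi := real_inner_le_norm (g t).1 (g t).2
      have hnn : (0:ℝ) ≤ ‖(g t).1‖ * ‖(g t).2‖ := mul_nonneg (norm_nonneg _) (norm_nonneg _)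
      nlinarith [projB_factor_nonneg hR0 (g t), projB_factor_le_one hR0 (g t)]
    · intro t ht
      have e2 : (v t (g t)).2 = E (τ t) ((R0 / max R0 ‖g t‖) • (g t).1)
          + (α - β * ‖(R0 / max R0 ‖g t‖) • (g t).2‖ ^ 2)
            • ((R0 / max R0 ‖g t‖) • (g t).2) := by
        rw [hvdef]; simp only [Psi, projB, Prod.smul_fst, Prod.smul_snd]
      rw [e2, inner_add_right, real_inner_smul_right, real_inner_smul_right,
        real_inner_self_eq_norm_sq]
      have hl0 := projB_factor_nonneg hR0 (g t)
      have hl1 := projB_factor_le_one hR0 (g t)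
      have hgrow := hE.growth (τ t) (hτmem t) ((R0 / max R0 ‖g t‖) • (g t).1)
      have hπ1 : ‖(R0 / max R0 ‖g t‖) • (g t).1‖ ≤ ‖(g t).1‖ := by
        rw [norm_smul, Real.norm_eq_abs, abs_of_nonneg hl0]
        nlinarith [norm_nonneg (g t).1]
      have hfirst : (inner ℝ ((g t).2) (E (τ t) ((R0 / max R0 ‖g t‖) • (g t).1)) : ℝ)
          ≤ C_E * (1 + ‖(g t).1‖) * ‖(g t).2‖ := by
        calc (inner ℝ ((g t).2) (E (τ t) ((R0 / max R0 ‖g t‖) • (g t).1)) : ℝ)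
            ≤ ‖(g t).2‖ * ‖E (τ t) ((R0 / max R0 ‖g t‖) • (g t).1)‖ := real_inner_le_norm _ _
          _ ≤ ‖(g t).2‖ * (C_E * (1 + ‖(g t).1‖)) := by
              refine mul_le_mul_of_nonneg_left (hgrow.trans ?_) (norm_nonneg _)
              exact mul_le_mul_of_nonneg_left (by linarith) hCE.le
          _ = C_E * (1 + ‖(g t).1‖) * ‖(g t).2‖ := by ring
      have hsecond : (α - β * ‖(R0 / max R0 ‖g t‖) • (g t).2‖ ^ 2)
            * ((R0 / max R0 ‖g t‖) * ‖(g t).2‖ ^ 2)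
          ≤ α * ‖(g t).2‖ ^ 2 := by
        have hx : (0:ℝ) ≤ (R0 / max R0 ‖g t‖) * ‖(g t).2‖ ^ 2 :=
          mul_nonneg hl0 (sq_nonneg _)
        have hco : α - β * ‖(R0 / max R0 ‖g t‖) • (g t).2‖ ^ 2 ≤ α := by
          nlinarith [mul_nonneg hβ (sq_nonneg ‖(R0 / max R0 ‖g t‖) • (g t).2‖)]
        calc (α - β * ‖(R0 / max R0 ‖g t‖) • (g t).2‖ ^ 2)
              * ((R0 / max R0 ‖g t‖) * ‖(g t).2‖ ^ 2)
            ≤ α * ((R0 / max R0 ‖g t‖) * ‖(g t).2‖ ^ 2) := mul_le_mul_of_nonneg_right hco hx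
          _ ≤ α * ‖(g t).2‖ ^ 2 := by
              refine mul_le_mul_of_nonneg_left ?_ hα
              nlinarith [sq_nonneg ‖(g t).2‖]
      linarith [hfirst, hsecond]
  have hfb := hgrw f hfd
  rw [hf0] at hfb
  have hfR : ∀ t ∈ Icc (0:ℝ) T, ‖f t‖ ≤ R0 := by
    intro t ht
    refine (hfb t ht).trans ?_
    rw [hR0def]
    refine mul_le_mul_of_nonneg_left ?_ (by positivity)
    exact Real.exp_le_exp.mpr (mul_le_mul_of_nonneg_left ht.2 hc0.le)
  have hfd2 : ∀ t ∈ Icc (0:ℝ) T, HasDerivWithinAt f (Psi α β E t (f t)) (Icc 0 T) t := by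
    intro t ht
    have h := hfd t ht
    have e : v t (f t) = Psi α β E t (f t) := by
      rw [hvdef]
      show Psi α β E (τ t) (projB R0 (f t)) = _
      rw [hτeq t ht, projB_eq_self hR0 (hfR t ht)]
    rwa [e] at h
  have hfc : ContinuousOn f (Icc 0 T) := fun t ht => (hfd t ht).continuousWithinAt
  have hPsic : ContinuousOn (fun t => Psi α β E t (f t)) (Icc 0 T) := by
    have hE2 : ContinuousOn (fun t => E t (f t).1) (Icc 0 T) := by
      apply hE.cont.comp (continuousOn_id.prodMk (continuous_fst.comp_continuousOn hfc))
      intro t ht; exact ⟨ht, mem_univ _⟩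
    simp only [Psi]
    apply ContinuousOn.prodMk (continuous_snd.comp_continuousOn hfc)
    apply hE2.add
    refine ContinuousOn.smul (f := fun x => α - β * ‖(f x).2‖ ^ 2) (g := fun x => (f x).2) ?_ ?_
    · exact continuousOn_const.sub (continuousOn_const.mul
        (((continuous_snd.comp_continuousOn hfc).norm).pow 2))
    · exact continuous_snd.comp_continuousOn hfc
  have hUD := uniqueDiffOn_Icc hT
  have hCD : ContDiffOn ℝ 1 f (Icc 0 T) := by
    rw [show (1 : WithTop ℕ∞) = 0 + 1 from rfl, contDiffOn_succ_iff_derivWithin hUD]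
    refine ⟨fun t ht => (hfd2 t ht).differentiableWithinAt, ?_, ?_⟩
    · intro h; simp at h
    · rw [contDiffOn_zero]
      apply hPsic.congr
      intro t ht
      exact (hfd2 t ht).derivWithin (hUD t ht)
  refine ⟨f, hCD, hf0, hfd2, hfb, ?_⟩
  -- uniqueness
  intro Q hQC1 hQ0 hQd t ht
  have hQb := gronwall_aux hT hα hCE.le Q (fun s => Psi α β E s (Q s)) hQd ?_ ?_
  rotate_left
  · intro s hs
    simp only [Psi]
    exact real_inner_le_norm _ _
  · intro s hs
    simp only [Psi]
    rw [inner_add_right, real_inner_smul_right, real_inner_self_eq_norm_sq]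
    have hgrow := hE.growth s hs (Q s).1
    have hfirst : (inner ℝ ((Q s).2) (E s (Q s).1) : ℝ)
        ≤ C_E * (1 + ‖(Q s).1‖) * ‖(Q s).2‖ := by
      calc (inner ℝ ((Q s).2) (E s (Q s).1) : ℝ)
          ≤ ‖(Q s).2‖ * ‖E s (Q s).1‖ := real_inner_le_norm _ _
        _ ≤ ‖(Q s).2‖ * (C_E * (1 + ‖(Q s).1‖)) :=
            mul_le_mul_of_nonneg_left hgrow (norm_nonneg _)
        _ = C_E * (1 + ‖(Q s).1‖) * ‖(Q s).2‖ := by ring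
    nlinarith [mul_nonneg (mul_nonneg hβ (sq_nonneg ‖(Q s).2‖)) (sq_nonneg ‖(Q s).2‖)]
  rw [hQ0] at hQb
  have hQR : ∀ s ∈ Icc (0:ℝ) T, ‖Q s‖ ≤ R0 := by
    intro s hs
    refine (hQb s hs).trans ?_
    rw [hR0def]
    refine mul_le_mul_of_nonneg_left ?_ (by positivity)
    exact Real.exp_le_exp.mpr (mul_le_mul_of_nonneg_left hs.2 hc0.le)
  have hQv : ∀ s ∈ Icc (0:ℝ) T, HasDerivWithinAt Q (v s (Q s)) (Icc 0 T) s := by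
    intro s hs
    have h := hQd s hs
    have e : v s (Q s) = Psi α β E s (Q s) := by
      rw [hvdef]
      show Psi α β E (τ s) (projB R0 (Q s)) = _
      rw [hτeq s hs, projB_eq_self hR0 (hQR s hs)]
    rwa [← e] at h
  have hIci : ∀ s ∈ Ico (0:ℝ) T, Icc (0:ℝ) T ∈ 𝓝[Ici s] s := by
    intro s hs
    rw [mem_nhdsWithin]
    exact ⟨Iio T, isOpen_Iio, hs.2, fun x hx => ⟨hs.1.trans hx.2, hx.1.le⟩⟩
  have hQc : ContinuousOn Q (Icc 0 T) := fun s hs => (hQd s hs).continuousWithinAt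
  have huniq : EqOn Q f (Icc 0 T) := by
    apply ODE_solution_unique_of_mem_Icc_right
      (v := v) (s := fun _ => (univ : Set (Phase d))) (K := Lv.toNNReal)
      (fun s _ => (hvLipW s).lipschitzOnWith) hQc ?_ (fun _ _ => trivial) hfc ?_
      (fun _ _ => trivial) ?_
    · intro s hs
      exact (hQv s ⟨hs.1, hs.2.le⟩).mono_of_mem_nhdsWithin (hIci s hs)
    · intro s hs
      exact (hfd s ⟨hs.1, hs.2.le⟩).mono_of_mem_nhdsWithin (hIci s hs)
    · rw [hQ0, hf0]
  exact huniq ht
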